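/- Let R be a commutative Noetherian ring. Let Φ_st be the standard Thomason filtration (Z^i = Spec R for i ≤ 0 and Z^i = ∅ for i > 0), whose associated t-structure on D(R) is the standard t-structure with aisle U_st = {X : H^i(X) = 0 for i > 0} and connective truncation τ_st^{≤0}, and let Ψ = {W^i}_{i∈ℤ} be any Thomason filtration with associated aisle U_Ψ = {X ∈ D(R) : Supp H^i(X) ⊆ W^i for all i} and connective truncation τ_Ψ^{≤0}. Then the pointwise intersection filtration Φ_st ∩ Ψ has associated aisle U_{Φ_st ∩ Ψ} = U_st ∩ U_Ψ, and the connective truncation functor of the corresponding t-structure (the right adjoint to the inclusion U_st ∩ U_Ψ ⊆ D(R)) is naturally isomorphic to the composite τ_st^{≤0} ∘ τ_Ψ^{≤0}. -/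

import Mathlib

open CategoryTheory Limits

noncomputable section

attribute [local instance] HasDerivedCategory.standard

/-- A specialization-closed subset of the prime spectrum.  Over a Noetherian ring these are
exactly the Thomason subsets. -/
def SpecializationClosed {R : Type} [CommRing R] (Z : Set (PrimeSpectrum R)) : Prop :=
  ∀ ⦃p q : PrimeSpectrum R⦄, p ∈ Z → p ≤ q → q ∈ Z

/-- The aisle `U_Φ = {X ∈ D(R) : Supp H^i(X) ⊆ Z^i for all i}` associated to a Thomason
filtration `Φ = {Z^i}`. -/
def aisleOfFiltration (R : Type) [CommRing R] (Z : ℤ → Set (PrimeSpectrum R)) :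
    Set (DerivedCategory (ModuleCat R)) :=
  {X | ∀ i : ℤ, Module.support R ((DerivedCategory.homologyFunctor (ModuleCat R) i).obj X) ⊆ Z i}

/-- The standard Thomason filtration: `Z^i = Spec R` for `i ≤ 0` and `Z^i = ∅` for
`i > 0`. -/
def standardFiltration (R : Type) [CommRing R] : ℤ → Set (PrimeSpectrum R) :=
  fun i => if i ≤ 0 then Set.univ else ∅

/-- The aisle of the standard t-structure on `D(R)`:
`U_st = {X : H^i(X) = 0 for i > 0}`. -/
def standardAisle (R : Type) [CommRing R] : Set (DerivedCategory (ModuleCat R)) :=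
  {X | ∀ i : ℤ, 0 < i → IsZero ((DerivedCategory.homologyFunctor (ModuleCat R) i).obj X)}

namespace AisleAux

variable {R : Type} [CommRing R]

theorem subsingleton_of_isZero (M : ModuleCat R) (h : IsZero M) : Subsingleton M := by
  have h0 : (𝟙 M) = 0 := h.eq_of_src (𝟙 M) 0
  exact ⟨fun a b => (LinearMap.congr_fun (congrArg ModuleCat.Hom.hom h0) a).trans
    (LinearMap.congr_fun (congrArg ModuleCat.Hom.hom h0) b).symm⟩

theorem aisle_inter_eq (W : ℤ → Set (PrimeSpectrum R)) :
    aisleOfFiltration R (fun i => standardFiltration R i ∩ W i)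
      = standardAisle R ∩ aisleOfFiltration R W := by
  ext X
  simp only [Set.mem_inter_iff, aisleOfFiltration, standardAisle, Set.mem_setOf_eq]
  constructor
  · intro h
    refine ⟨fun i hi => ?_, fun i => (h i).trans Set.inter_subset_right⟩
    have h1 := (h i).trans Set.inter_subset_left
    rw [standardFiltration, if_neg (by omega)] at h1
    haveI := Module.support_eq_empty_iff (R := R).mp (Set.subset_empty_iff.mp h1)
    exact ModuleCat.isZero_of_subsingleton _
  · rintro ⟨h1, h2⟩ i
    refine Set.subset_inter ?_ (h2 i)
    by_cases hi : i ≤ 0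
    · rw [standardFiltration, if_pos hi]; exact Set.subset_univ _
    · rw [standardFiltration, if_neg hi]
      haveI := subsingleton_of_isZero _ (h1 i (by omega))
      rw [Module.support_eq_empty]

theorem isZero_homology_of_orthogonal (Cx : DerivedCategory (ModuleCat R))
    (hC : ∀ (A : DerivedCategory (ModuleCat R)), A ∈ standardAisle R → ∀ f : A ⟶ Cx, f = 0)
    (i : ℤ) (hi : i ≤ 0) :
    IsZero ((DerivedCategory.homologyFunctor (ModuleCat R) i).obj Cx) := by
  haveI : (DerivedCategory.Q (C := ModuleCat R)).EssSurj :=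
    Localization.essSurj _ (HomologicalComplex.quasiIso _ _)
  obtain ⟨K, ⟨e⟩⟩ : ∃ K, Nonempty (DerivedCategory.Q.obj K ≅ Cx) :=
    ⟨_, ⟨DerivedCategory.Q.objObjPreimageIso Cx⟩⟩
  set M : ModuleCat R := K.cycles i with hM
  set A₀ := (HomologicalComplex.single (ModuleCat R) (ComplexShape.up ℤ) i).obj M with hA₀
  set φ : A₀ ⟶ K :=
    HomologicalComplex.mkHomFromSingle (K.iCycles i) (fun k _ => K.iCycles_d i k) with hφ
  have hA : DerivedCategory.Q.obj A₀ ∈ standardAisle R := by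
    intro j hj
    exact (HomologicalComplex.isZero_single_obj_homology _ i M j (by omega)).of_iso
      ((DerivedCategory.homologyFunctorFactors (ModuleCat R) j).app A₀)
  have hQφ : DerivedCategory.Q.map φ = 0 := by
    have h1 := hC _ hA (DerivedCategory.Q.map φ ≫ e.hom)
    rw [← cancel_mono e.hom, h1, zero_comp]
  have hhom : HomologicalComplex.homologyMap φ i = 0 := by
    have nat := (DerivedCategory.homologyFunctorFactors (ModuleCat R) i).hom.naturality φ
    change (HomologicalComplex.homologyFunctor (ModuleCat R) (ComplexShape.up ℤ) i).map φ = 0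
    rw [← cancel_epi ((DerivedCategory.homologyFunctorFactors (ModuleCat R) i).hom.app A₀),
      comp_zero, ← nat]
    dsimp only [Functor.comp_map]
    rw [hQφ, CategoryTheory.Functor.map_zero, zero_comp]
  have hcyc : HomologicalComplex.cyclesMap φ i
      = (HomologicalComplex.singleObjCyclesSelfIso (ComplexShape.up ℤ) i M).hom := by
    rw [← cancel_mono (K.iCycles i), HomologicalComplex.cyclesMap_i,
      HomologicalComplex.singleObjCyclesSelfIso_hom, Category.assoc,
      HomologicalComplex.mkHomFromSingle_f]
  have hπ : K.homologyπ i = 0 := by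
    have h3 := HomologicalComplex.homologyπ_naturality φ i
    rw [hhom, comp_zero, hcyc] at h3
    rw [← cancel_epi (HomologicalComplex.singleObjCyclesSelfIso (ComplexShape.up ℤ) i M).hom,
      comp_zero, ← h3]
  have hK : IsZero (K.homology i) := by
    rw [IsZero.iff_id_eq_zero, ← cancel_epi (K.homologyπ i), hπ, zero_comp, comp_zero]
  exact hK.of_iso ((DerivedCategory.homologyFunctor (ModuleCat R) i).mapIso e.symm ≪≫
    (DerivedCategory.homologyFunctorFactors (ModuleCat R) i).app K)

theorem isIso_homologyMap_counit
    (τst : DerivedCategory (ModuleCat R) ⥤ ObjectProperty.FullSubcategory (· ∈ standardAisle R))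
    (adj : ObjectProperty.ι (· ∈ standardAisle R) ⊣ τst)
    (Z : DerivedCategory (ModuleCat R)) (i : ℤ) (hi : i ≤ 0) :
    IsIso ((DerivedCategory.homologyFunctor (ModuleCat R) i).map (adj.counit.app Z)) := by
  obtain ⟨Cc, p, δ, hT⟩ := Pretriangulated.distinguished_cocone_triangle (adj.counit.app Z)
  set T := Pretriangulated.Triangle.mk (adj.counit.app Z) p δ with hTdef
  have hC : ∀ (A : DerivedCategory (ModuleCat R)), A ∈ standardAisle R →
      ∀ f : A ⟶ Cc, f = 0 := by
    intro A hA f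
    obtain ⟨E, s, a, hE⟩ := Pretriangulated.distinguished_cocone_triangle₂ (f ≫ δ)
    have hEmem : E ∈ standardAisle R := by
      intro j hj
      have ex := DerivedCategory.HomologySequence.exact₂ _ hE j
      exact ex.isZero_X₂ (((τst.obj Z).property j hj).eq_of_src _ _) ((hA j hj).eq_of_tgt _ _)
    obtain ⟨g, hg1, hg2⟩ := Pretriangulated.complete_distinguished_triangle_morphism₂
      _ T hE hT (𝟙 _) f (by dsimp [T]; erw [CategoryTheory.Functor.map_id]; exact Category.comp_id _)
    set g' := (adj.homEquiv ⟨E, hEmem⟩ Z) g with hg'def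
    have hfact : (ObjectProperty.ι (· ∈ standardAisle R)).map g' ≫ adj.counit.app Z
        = g := by
      have h4 := (adj.homEquiv ⟨E, hEmem⟩ Z).symm_apply_apply g
      rwa [Adjunction.homEquiv_counit] at h4
    have hu : s ≫ (ObjectProperty.ι (· ∈ standardAisle R)).map g' = 𝟙 _ := by
      have h5 : (s ≫ (ObjectProperty.ι (· ∈ standardAisle R)).map g')
          ≫ adj.counit.app Z = 𝟙 _ ≫ adj.counit.app Z := by
        rw [Category.assoc, hfact]
        exact hg1
      have h7 : (adj.homEquiv (τst.obj Z) Z).symm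
            (ObjectProperty.homMk (s ≫ (ObjectProperty.ι (· ∈ standardAisle R)).map g') :
              τst.obj Z ⟶ τst.obj Z)
          = (adj.homEquiv (τst.obj Z) Z).symm (𝟙 _) := by
        rw [Adjunction.homEquiv_counit, Adjunction.homEquiv_counit, CategoryTheory.Functor.map_id,
          Category.id_comp]
        exact h5.trans (Category.id_comp _)
      have h11 := congrArg InducedCategory.Hom.hom ((adj.homEquiv (τst.obj Z) Z).symm.injective h7)
      exact h11
    have hw : f ≫ δ = 0 := by
      have h8 := Pretriangulated.comp_distTriang_mor_zero₃₁ _ hE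
      dsimp at h8
      calc f ≫ δ
          = ((f ≫ δ) ≫ (shiftFunctor _ (1 : ℤ)).map s) ≫
              (shiftFunctor _ (1 : ℤ)).map
                ((ObjectProperty.ι (· ∈ standardAisle R)).map g') := by
            rw [Category.assoc, ← CategoryTheory.Functor.map_comp, hu, CategoryTheory.Functor.map_id, Category.comp_id]
        _ = 0 := by
            rw [show (f ≫ δ) ≫ (shiftFunctor _ (1 : ℤ)).map s = 0 from h8, zero_comp]
    obtain ⟨q, hq⟩ := Pretriangulated.Triangle.coyoneda_exact₃ T hT f hw
    have hqf : q = (ObjectProperty.ι (· ∈ standardAisle R)).map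
        ((adj.homEquiv ⟨A, hA⟩ Z) q) ≫ adj.counit.app Z := by
      have h4 := (adj.homEquiv ⟨A, hA⟩ Z).symm_apply_apply q
      rw [Adjunction.homEquiv_counit] at h4
      exact h4.symm
    have h9 : adj.counit.app Z ≫ T.mor₂ = 0 := Pretriangulated.comp_distTriang_mor_zero₁₂ _ hT
    rw [hq, hqf]
    erw [Category.assoc, h9]
    exact comp_zero
  have hCz : ∀ j : ℤ, j ≤ 0 →
      IsZero ((DerivedCategory.homologyFunctor (ModuleCat R) j).obj Cc) :=
    fun j hj => isZero_homology_of_orthogonal Cc hC j hj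
  have hepi : Epi ((DerivedCategory.homologyFunctor (ModuleCat R) i).map T.mor₁) :=
    (DerivedCategory.HomologySequence.epi_homologyMap_mor₁_iff T hT i).mpr
      ((hCz i hi).eq_of_tgt _ _)
  have hmono : Mono ((DerivedCategory.homologyFunctor (ModuleCat R) i).map T.mor₁) :=
    (DerivedCategory.HomologySequence.mono_homologyMap_mor₁_iff T hT (i - 1) i (by omega)).mpr
      ((hCz (i - 1) (by omega)).eq_of_src _ _)
  have h10 : adj.counit.app Z = T.mor₁ := rfl
  rw [h10]
  exact (isIso_iff_mono_and_epi _).mpr ⟨hmono, hepi⟩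

theorem counit_obj_mem (W : ℤ → Set (PrimeSpectrum R))
    (τst : DerivedCategory (ModuleCat R) ⥤ ObjectProperty.FullSubcategory (· ∈ standardAisle R))
    (adj : ObjectProperty.ι (· ∈ standardAisle R) ⊣ τst)
    (Z : DerivedCategory (ModuleCat R)) (hZ : Z ∈ aisleOfFiltration R W) :
    (ObjectProperty.ι (· ∈ standardAisle R)).obj (τst.obj Z)
      ∈ aisleOfFiltration R (fun i => standardFiltration R i ∩ W i) := by
  rw [aisle_inter_eq]
  refine ⟨(τst.obj Z).property, ?_⟩
  intro i
  by_cases hi : i ≤ 0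
  · haveI := isIso_homologyMap_counit τst adj Z i hi
    set eiso := asIso ((DerivedCategory.homologyFunctor (ModuleCat R) i).map
      (adj.counit.app Z)) with heiso
    have hsurj : Function.Surjective eiso.inv.hom := fun y =>
      ⟨eiso.hom.hom y, LinearMap.congr_fun (congrArg ModuleCat.Hom.hom eiso.hom_inv_id) y⟩
    exact (Module.support_subset_of_surjective _ hsurj).trans (hZ i)
  · haveI : Subsingleton ((DerivedCategory.homologyFunctor (ModuleCat R) i).obj
        ((ObjectProperty.ι (· ∈ standardAisle R)).obj (τst.obj Z))) :=
      subsingleton_of_isZero _ ((τst.obj Z).property i (by omega))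
    rw [Module.support_eq_empty]
    exact Set.empty_subset _

@[simp]
theorem homMk_hom_eq {C : Type*} [Category C] {P : ObjectProperty C}
    {X Y : P.FullSubcategory} (f : X ⟶ Y) : ObjectProperty.homMk f.hom = f := rfl

theorem homMk_comp_eq {C : Type*} [Category C] {P : ObjectProperty C}
    {X Y Z : P.FullSubcategory} (f : X.obj ⟶ Y.obj) (g : Y.obj ⟶ Z.obj) :
    ObjectProperty.homMk (f ≫ g) = ObjectProperty.homMk f ≫ ObjectProperty.homMk g := rfl

theorem mem_standard_of_mem_inter {W : ℤ → Set (PrimeSpectrum R)}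
    {X : DerivedCategory (ModuleCat R)}
    (h : X ∈ aisleOfFiltration R (fun i => standardFiltration R i ∩ W i)) :
    X ∈ standardAisle R := by
  rw [aisle_inter_eq] at h; exact h.1

theorem mem_psi_of_mem_inter {W : ℤ → Set (PrimeSpectrum R)}
    {X : DerivedCategory (ModuleCat R)}
    (h : X ∈ aisleOfFiltration R (fun i => standardFiltration R i ∩ W i)) :
    X ∈ aisleOfFiltration R W := by
  rw [aisle_inter_eq] at h; exact h.2

end AisleAux

/-- Let `Φ_st` be the standard filtration and `Ψ = {W^i}` any Thomason filtration on a
Noetherian ring `R`.  Then the pointwise intersection filtration `Φ_st ∩ Ψ` has aisle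
`U_st ∩ U_Ψ`, and the corresponding connective truncation functor (any right adjoint to the
inclusion of the aisle) is naturally isomorphic to the composite `τ_st^{≤0} ∘ τ_Ψ^{≤0}` of
the truncation functors of the two given t-structures. -/
theorem aisle_inter_standard_truncation
    (R : Type) [CommRing R] [IsNoetherianRing R]
    (W : ℤ → Set (PrimeSpectrum R))
    (hW : ∀ i : ℤ, SpecializationClosed (W i))
    (hdec : ∀ i : ℤ, W (i + 1) ⊆ W i) :
    (aisleOfFiltration R (fun i => standardFiltration R i ∩ W i)
        = standardAisle R ∩ aisleOfFiltration R W) ∧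
    (∀ (τst : DerivedCategory (ModuleCat R) ⥤ ObjectProperty.FullSubcategory (· ∈ standardAisle R))
      (_ : ObjectProperty.ι (· ∈ standardAisle R) ⊣ τst)
      (τΨ : DerivedCategory (ModuleCat R) ⥤ ObjectProperty.FullSubcategory (· ∈ aisleOfFiltration R W))
      (_ : ObjectProperty.ι (· ∈ aisleOfFiltration R W) ⊣ τΨ)
      (τ' : DerivedCategory (ModuleCat R) ⥤
        ObjectProperty.FullSubcategory (· ∈ aisleOfFiltration R (fun i => standardFiltration R i ∩ W i)))
      (_ : ObjectProperty.ι
          (· ∈ aisleOfFiltration R (fun i => standardFiltration R i ∩ W i)) ⊣ τ'),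
      Nonempty
        ((τΨ ⋙ ObjectProperty.ι (· ∈ aisleOfFiltration R W) ⋙
            τst ⋙ ObjectProperty.ι (· ∈ standardAisle R)) ≅
          (τ' ⋙ ObjectProperty.ι
            (· ∈ aisleOfFiltration R (fun i => standardFiltration R i ∩ W i))))) := by
  constructor
  · exact AisleAux.aisle_inter_eq W
  · intro τst adjst τΨ adjΨ τ' adj'
    -- the composite functor, with values in the intersection aisle
    have hland : ∀ Y : DerivedCategory (ModuleCat R),
        (τΨ ⋙ ObjectProperty.ι (· ∈ aisleOfFiltration R W) ⋙
          τst ⋙ ObjectProperty.ι (· ∈ standardAisle R)).obj Y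
        ∈ aisleOfFiltration R (fun i => standardFiltration R i ∩ W i) := fun Y =>
      AisleAux.counit_obj_mem W τst adjst _ (τΨ.obj Y).property
    set G : DerivedCategory (ModuleCat R) ⥤
        ObjectProperty.FullSubcategory (· ∈ aisleOfFiltration R (fun i => standardFiltration R i ∩ W i)) :=
      ObjectProperty.lift _ (τΨ ⋙ ObjectProperty.ι (· ∈ aisleOfFiltration R W) ⋙
          τst ⋙ ObjectProperty.ι (· ∈ standardAisle R)) hland with hG
    -- G is right adjoint to the inclusion of the intersection aisle
    have adjG : ObjectProperty.ι
        (· ∈ aisleOfFiltration R (fun i => standardFiltration R i ∩ W i)) ⊣ G := by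
      refine Adjunction.mkOfHomEquiv
        { homEquiv := fun A Y =>
            { toFun := fun f => ObjectProperty.homMk ((adjst.homEquiv
                  ⟨A.obj, AisleAux.mem_standard_of_mem_inter A.property⟩ _
                ((adjΨ.homEquiv ⟨A.obj, AisleAux.mem_psi_of_mem_inter A.property⟩ Y) f).hom).hom)
              invFun := fun g => (adjΨ.homEquiv
                  ⟨A.obj, AisleAux.mem_psi_of_mem_inter A.property⟩ Y).symm
                (ObjectProperty.homMk ((adjst.homEquiv
                  ⟨A.obj, AisleAux.mem_standard_of_mem_inter A.property⟩ _).symm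
                  (ObjectProperty.homMk g.hom)))
              left_inv := fun f => by simp
              right_inv := fun g => by ext; simp }
          homEquiv_naturality_left_symm := ?_
          homEquiv_naturality_right := ?_ }
      · intro A A' Y f g
        dsimp only [Equiv.coe_fn_symm_mk]
        rw [Adjunction.homEquiv_counit, Adjunction.homEquiv_counit, Adjunction.homEquiv_counit,
          Adjunction.homEquiv_counit]
        simp
      · intro A Y Y' f g
        ext
        simp [G]
        rw [adjΨ.homEquiv_naturality_right, ObjectProperty.FullSubcategory.comp_hom,
          adjst.homEquiv_naturality_right, ObjectProperty.FullSubcategory.comp_hom]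
    exact ⟨(ObjectProperty.liftCompιIso _ _ hland).symm ≪≫
      Functor.isoWhiskerRight (Adjunction.rightAdjointUniq adjG adj') _⟩
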